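/- arXiv:1912.04774 — 4 statements merged into one kernel-verified Lean document; each statement's English description precedes it below -/
import Mathlib

section
/- Let (T, 𝒜) be a measurable space, μ a finite measure on T, and v : T → ℝ a measurable function. Suppose p* ≥ 0 is the lowest optimal uniform price, in the sense that for every p with 0 ≤ p < p* one has p · μ{t : v(t) ≥ p} < p* · μ{t : v(t) ≥ p*}. If T̃ ⊆ T is a measurable set with {t : v(t) ≥ p*} ⊆ T̃, then for every p̃ with 0 ≤ p̃ < p*, it holds that p̃ · μ(T̃ ∩ {t : v(t) ≥ p̃}) < p* · μ(T̃ ∩ {t : v(t) ≥ p*}). (This is the key step in Proposition 1: in any equilibrium with simple evidence, the monopolist's price to the non-disclosing pool cannot be below his optimal uniform price p*.) -/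
open MeasureTheory

/-- Key step in Proposition 1 (simple evidence does not help consumers):
if `p*` is the lowest optimal uniform price, then against any non-disclosing
pool `T̃` containing all types with valuation at least `p*`, no price strictly
below `p*` can be optimal. -/
theorem stmt_0 {T : Type*} [MeasurableSpace T] (μ : Measure T) [IsFiniteMeasure μ]
    (v : T → ℝ) (hv : Measurable v) (pstar : ℝ) (hpstar : 0 ≤ pstar)
    (hopt : ∀ p : ℝ, 0 ≤ p → p < pstar →
      p * (μ {t | p ≤ v t}).toReal < pstar * (μ {t | pstar ≤ v t}).toReal)
    (Ttil : Set T) (hTmeas : MeasurableSet Ttil)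
    (hTsub : {t | pstar ≤ v t} ⊆ Ttil) :
    ∀ ptil : ℝ, 0 ≤ ptil → ptil < pstar →
      ptil * (μ (Ttil ∩ {t | ptil ≤ v t})).toReal <
        pstar * (μ (Ttil ∩ {t | pstar ≤ v t})).toReal := by
  intro ptil h0 hlt
  have heq : Ttil ∩ {t | pstar ≤ v t} = {t | pstar ≤ v t} :=
    Set.inter_eq_right.mpr hTsub
  rw [heq]
  have hle : μ (Ttil ∩ {t | ptil ≤ v t}) ≤ μ {t | ptil ≤ v t} :=
    measure_mono Set.inter_subset_right
  have := hopt ptil h0 hlt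
  calc ptil * (μ (Ttil ∩ {t | ptil ≤ v t})).toReal
      ≤ ptil * (μ {t | ptil ≤ v t}).toReal := by
        apply mul_le_mul_of_nonneg_left _ h0
        exact ENNReal.toReal_mono (measure_ne_top μ _) hle
    _ < pstar * (μ {t | pstar ≤ v t}).toReal := this
end

section
/- Define z : [0,1] → ℝ by z(0) = 0 and, for v ∈ (2^{−(k+1)}, 2^{−k}] with k ∈ ℕ, z(v) = 2^{−(k+1)}. Then ∫₀¹ (v − z(v)) dv = 1/6. (This is Observation 2's statement that Zeno's Partition yields ex ante consumer surplus 1/6 for a uniform valuation on [0,1], which exceeds the surplus 1/8 without personalized pricing.) -/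
/-!
The segments `(r^(k+1), r^k]` of a geometric partition of `(0, 1]` carry surplus
`∫ (v - r^(k+1)) = (r^k - r^(k+1))^2 / 2 = (1 - r)^2 / 2 * (r^2)^k`, so the total surplus is the
geometric series `(1 - r)^2 / (2 (1 - r^2)) = (1 - r) / (2 (1 + r))`. Zeno's Partition is the case
`r = 1/2`.
-/

open MeasureTheory Set

theorem integral_Ioc_sub_left {a b : ℝ} (hab : a ≤ b) :
    ∫ v in Ioc a b, (v - a) = (b - a) ^ 2 / 2 := by
  rw [← intervalIntegral.integral_of_le hab, intervalIntegral.integral_comp_sub_right (fun x => x)]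
  simp

section GeometricPartition

variable {r : ℝ}

theorem pairwise_disjoint_Ioc_pow_succ_pow (hr₀ : 0 ≤ r) (hr₁ : r ≤ 1) :
    Pairwise (Function.onFun Disjoint fun k : ℕ => Ioc (r ^ (k + 1)) (r ^ k)) :=
  (pow_right_anti₀ hr₀ hr₁).pairwise_disjoint_on_Ioc_succ

theorem iUnion_Ioc_pow_succ_pow (hr₀ : 0 < r) (hr₁ : r < 1) :
    ⋃ k : ℕ, Ioc (r ^ (k + 1)) (r ^ k) = Ioc 0 1 := by
  ext v
  simp only [mem_iUnion]
  constructor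
  · rintro ⟨k, hk⟩
    exact ⟨(pow_pos hr₀ _).trans hk.1, hk.2.trans (pow_le_one₀ hr₀.le hr₁.le)⟩
  · rintro ⟨hv₀, hv₁⟩
    exact exists_nat_pow_near_of_lt_one hv₀ hv₁ hr₀ hr₁

theorem integral_Ioc_zero_one_of_eqOn_sub_pow_succ (hr₀ : 0 < r) (hr₁ : r < 1) {f : ℝ → ℝ}
    (hf : ∀ k : ℕ, EqOn f (fun v => v - r ^ (k + 1)) (Ioc (r ^ (k + 1)) (r ^ k))) :
    ∫ v in Ioc 0 1, f v = (1 - r) / (2 * (1 + r)) := by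
  have hpiece (k : ℕ) :
      ∫ v in Ioc (r ^ (k + 1)) (r ^ k), f v = (1 - r) ^ 2 / 2 * (r ^ 2) ^ k := by
    rw [setIntegral_congr_fun measurableSet_Ioc (hf k),
      integral_Ioc_sub_left (pow_le_pow_of_le_one hr₀.le hr₁.le (k.le_add_right 1))]
    ring
  have hnorm (k : ℕ) :
      ∫ v in Ioc (r ^ (k + 1)) (r ^ k), ‖f v‖ = (1 - r) ^ 2 / 2 * (r ^ 2) ^ k := by
    rw [← hpiece]
    refine setIntegral_congr_fun measurableSet_Ioc fun v hv => ?_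
    rw [hf k hv, Real.norm_of_nonneg (sub_nonneg.2 hv.1.le)]
  have hgeom : HasSum (fun k : ℕ => (1 - r) ^ 2 / 2 * (r ^ 2) ^ k)
      ((1 - r) ^ 2 / 2 * (1 - r ^ 2)⁻¹) :=
    (hasSum_geometric_of_lt_one (by positivity) (by nlinarith)).mul_left _
  have hint : IntegrableOn f (⋃ k : ℕ, Ioc (r ^ (k + 1)) (r ^ k)) := by
    refine integrableOn_iUnion_of_summable_integral_norm (fun k => ?_) ?_
    · exact (continuous_id.sub continuous_const).integrableOn_Ioc.congr_fun (hf k).symm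
        measurableSet_Ioc
    · simpa only [hnorm] using hgeom.summable
  have hsum := hasSum_integral_iUnion (fun _ => measurableSet_Ioc)
    (pairwise_disjoint_Ioc_pow_succ_pow hr₀.le hr₁.le) hint
  rw [iUnion_Ioc_pow_succ_pow hr₀ hr₁] at hsum
  simp only [hpiece] at hsum
  rw [hsum.unique hgeom]
  have : 1 + r ≠ 0 := by linarith
  have : 1 - r ^ 2 ≠ 0 := by nlinarith
  field_simp
  ring

end GeometricPartition

theorem stmt_4_general (z : ℝ → ℝ)
    (hz : ∀ k : ℕ, ∀ v : ℝ, (2 : ℝ) ^ (-(k + 1 : ℤ)) < v → v ≤ (2 : ℝ) ^ (-(k : ℤ)) →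
      z v = (2 : ℝ) ^ (-(k + 1 : ℤ))) :
    ∫ v in (0 : ℝ)..1, (v - z v) = 1 / 6 := by
  have hzeno (k : ℕ) :
      EqOn (fun v => v - z v) (fun v => v - 2⁻¹ ^ (k + 1)) (Ioc (2⁻¹ ^ (k + 1)) (2⁻¹ ^ k)) := by
    have hlow : (2 : ℝ) ^ (-(k + 1 : ℤ)) = 2⁻¹ ^ (k + 1) := by
      rw [← inv_zpow']
      exact_mod_cast zpow_natCast (2⁻¹ : ℝ) (k + 1)
    have hhigh : (2 : ℝ) ^ (-(k : ℤ)) = 2⁻¹ ^ k := by rw [← inv_zpow', zpow_natCast]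
    intro v hv
    rw [← hlow, ← hhigh] at hv
    simp only [hz k v hv.1 hv.2, hlow]
  rw [intervalIntegral.integral_of_le zero_le_one,
    integral_Ioc_zero_one_of_eqOn_sub_pow_succ (by norm_num) (by norm_num) hzeno]
  norm_num

/-- Observation 2: Zeno's Partition yields ex ante consumer surplus `1/6` for a
uniform valuation on `[0,1]`. Here `z v` is the price charged to type `v`:
`z 0 = 0`, and `z v = 2^{-(k+1)}` for `v ∈ (2^{-(k+1)}, 2^{-k}]`. -/
theorem stmt_4 (z : ℝ → ℝ) (hz0 : z 0 = 0)
    (hz : ∀ k : ℕ, ∀ v : ℝ, (2 : ℝ) ^ (-(k + 1 : ℤ)) < v → v ≤ (2 : ℝ) ^ (-(k : ℤ)) →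
      z v = (2 : ℝ) ^ (-(k + 1 : ℤ))) :
    ∫ v in (0 : ℝ)..1, (v - z v) = 1 / 6 :=
  stmt_4_general z hz
end

section
/- Let k > 0, let γ = (k+1)^{1/k} (so γ > 1), and let ℓ be a natural number. Define P̄(ṽ) = (ṽ^k − γ^{−k(ℓ+1)}) · (ṽ/γ) + (γ^{−kℓ} − ṽ^k) · ṽ. Then for every ṽ ∈ [γ^{−(ℓ+1)}, γ^{−ℓ}], P̄(ṽ) ≥ (γ^{−kℓ} − γ^{−k(ℓ+1)}) · γ^{−(ℓ+1)}, and P̄ takes exactly this value at both endpoints ṽ = γ^{−(ℓ+1)} and ṽ = γ^{−ℓ}. (This is the key step of Proposition 4: splitting the greedy segment S_ℓ = [γ^{−(ℓ+1)}, γ^{−ℓ}] into two sub-segments at any interior point ṽ cannot lower the mass-weighted average price below that achieved by the greedy segmentation.) -/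
/-!
Writing `P̄(v) = (v^k - A)(v/γ) + (B - v^k) v` as `(B - A/γ) v - (1 - 1/γ) v^{k+1}` shows that it
is concave on `v ≥ 0` whenever `k ≥ 0` and `γ ≥ 1`. Hence on `[a, b]` it is at least the smaller
of its endpoint values, and when `a^k = A`, `b^k = B` and `b = γ a` both endpoint values equal
`(B - A) a`.
-/

open Real Set

noncomputable def splitPrice (k γ A B v : ℝ) : ℝ :=
  (v ^ k - A) * (v / γ) + (B - v ^ k) * v

lemma splitPrice_eq {k : ℝ} (hk : 0 ≤ k) (γ A B : ℝ) {v : ℝ} (hv : 0 ≤ v) :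
    splitPrice k γ A B v = (B - A / γ) * v - (1 - γ⁻¹) * v ^ (k + 1) := by
  rw [splitPrice, rpow_add' hv (by linarith), rpow_one]
  ring

lemma concaveOn_mul_sub_mul_rpow (c : ℝ) {d p : ℝ} (hd : 0 ≤ d) (hp : 1 ≤ p) :
    ConcaveOn ℝ (Ici 0) fun v : ℝ => c * v - d * v ^ p :=
  ((LinearMap.mulLeft ℝ c).concaveOn (convex_Ici 0)).sub ((convexOn_rpow hp).smul hd)

lemma concaveOn_splitPrice {k γ : ℝ} (hk : 0 ≤ k) (hγ : 1 ≤ γ) (A B : ℝ) :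
    ConcaveOn ℝ (Ici 0) (splitPrice k γ A B) :=
  (concaveOn_mul_sub_mul_rpow _ (sub_nonneg.2 (inv_le_one_of_one_le₀ hγ)) (by linarith)).congr
    fun _ hv => (splitPrice_eq hk γ A B hv).symm

lemma splitPrice_left (k γ B a : ℝ) : splitPrice k γ (a ^ k) B a = (B - a ^ k) * a := by
  rw [splitPrice]
  ring

lemma splitPrice_right (k γ A b : ℝ) : splitPrice k γ A (b ^ k) b = (b ^ k - A) * (b / γ) := by
  rw [splitPrice]
  ring

theorem splitPrice_ge {k γ a b v : ℝ} (hk : 0 ≤ k) (hγ : 1 ≤ γ) (ha : 0 ≤ a) (hba : b / γ = a)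
    (hv : v ∈ Icc a b) : (b ^ k - a ^ k) * a ≤ splitPrice k γ (a ^ k) (b ^ k) v := by
  have hb : 0 ≤ b := ha.trans (hv.1.trans hv.2)
  have := (concaveOn_splitPrice hk hγ (a ^ k) (b ^ k)).ge_on_segment ha hb (Icc_subset_segment hv)
  rwa [splitPrice_left, splitPrice_right, hba, min_self] at this

theorem stmt_8_general (k : ℝ) (hk : 0 < k) (γ : ℝ)
    (hγ1 : 1 < γ) (ℓ : ℕ) (P : ℝ → ℝ)
    (hP : ∀ vt : ℝ, P vt = (vt ^ k - γ ^ (-(k * ((ℓ : ℝ) + 1)))) * (vt / γ) +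
      (γ ^ (-(k * (ℓ : ℝ))) - vt ^ k) * vt) :
    (∀ vt ∈ Set.Icc (γ ^ (-((ℓ : ℝ) + 1))) (γ ^ (-(ℓ : ℝ))),
      P vt ≥ (γ ^ (-(k * (ℓ : ℝ))) - γ ^ (-(k * ((ℓ : ℝ) + 1)))) * γ ^ (-((ℓ : ℝ) + 1))) ∧
    P (γ ^ (-((ℓ : ℝ) + 1))) =
      (γ ^ (-(k * (ℓ : ℝ))) - γ ^ (-(k * ((ℓ : ℝ) + 1)))) * γ ^ (-((ℓ : ℝ) + 1)) ∧
    P (γ ^ (-(ℓ : ℝ))) =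
      (γ ^ (-(k * (ℓ : ℝ))) - γ ^ (-(k * ((ℓ : ℝ) + 1)))) * γ ^ (-((ℓ : ℝ) + 1)) := by
  have hγ0 : 0 < γ := one_pos.trans hγ1
  have hpow (x : ℝ) : (γ ^ (-x)) ^ k = γ ^ (-(k * x)) := by
    rw [← rpow_mul hγ0.le]
    ring_nf
  have hstep : γ ^ (-(ℓ : ℝ)) / γ = γ ^ (-((ℓ : ℝ) + 1)) := by
    rw [← rpow_sub_one hγ0.ne', neg_add']
  have hPeq : P = splitPrice k γ (γ ^ (-(k * ((ℓ : ℝ) + 1)))) (γ ^ (-(k * (ℓ : ℝ)))) := funext hP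
  rw [hPeq, ← hpow, ← hpow]
  refine ⟨fun v hv => splitPrice_ge hk.le hγ1.le (by positivity) hstep hv,
    splitPrice_left .., ?_⟩
  rw [splitPrice_right, hstep]

/-- Key step of Proposition 4: splitting the greedy segment
`S_ℓ = [γ^{-(ℓ+1)}, γ^{-ℓ}]` (where `γ = (k+1)^{1/k} > 1`) at any point `ṽ`
yields mass-weighted average price
`P̄(ṽ) = (ṽ^k - γ^{-k(ℓ+1)}) (ṽ/γ) + (γ^{-kℓ} - ṽ^k) ṽ`
that is at least the greedy value `(γ^{-kℓ} - γ^{-k(ℓ+1)}) γ^{-(ℓ+1)}`,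
with equality at both endpoints of the segment. -/
theorem stmt_8 (k : ℝ) (hk : 0 < k) (γ : ℝ) (hγ : γ = (k + 1) ^ (1 / k))
    (hγ1 : 1 < γ) (ℓ : ℕ) (P : ℝ → ℝ)
    (hP : ∀ vt : ℝ, P vt = (vt ^ k - γ ^ (-(k * ((ℓ : ℝ) + 1)))) * (vt / γ) +
      (γ ^ (-(k * (ℓ : ℝ))) - vt ^ k) * vt) :
    (∀ vt ∈ Set.Icc (γ ^ (-((ℓ : ℝ) + 1))) (γ ^ (-(ℓ : ℝ))),
      P vt ≥ (γ ^ (-(k * (ℓ : ℝ))) - γ ^ (-(k * ((ℓ : ℝ) + 1)))) * γ ^ (-((ℓ : ℝ) + 1))) ∧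
    P (γ ^ (-((ℓ : ℝ) + 1))) =
      (γ ^ (-(k * (ℓ : ℝ))) - γ ^ (-(k * ((ℓ : ℝ) + 1)))) * γ ^ (-((ℓ : ℝ) + 1)) ∧
    P (γ ^ (-(ℓ : ℝ))) =
      (γ ^ (-(k * (ℓ : ℝ))) - γ ^ (-(k * ((ℓ : ℝ) + 1)))) * γ ^ (-((ℓ : ℝ) + 1)) :=
  stmt_8_general k hk γ hγ1 ℓ P hP
end

section
/- Let F : ℝ → ℝ be differentiable on (−1, 1) with F > 0 on (−1, 1) and derivative f > 0 on (−1, 1), and suppose log∘F is strictly concave on (−1, 1). If p₁ ∈ (0, 2) satisfies the first-order condition p₁ = 2·F(−p₁/2)/f(−p₁/2), then p₁ < 2·F(0)/f(0). (This is the central inequality of Proposition 7: the local monopoly price p₁^L charged to a non-disclosing consumer in the simple-evidence equilibrium is strictly below the uniform duopoly price p* = 2F(0)/f(0) charged without personalized pricing.) -/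
/-- Central inequality of Proposition 7: with a strictly log-concave CDF `F`
(positive, with positive derivative `f`) on `(-1, 1)`, the local monopoly
price `p₁ ∈ (0, 2)` solving the first-order condition
`p₁ = 2 F(-p₁/2) / f(-p₁/2)` is strictly below the uniform duopoly price
`p* = 2 F 0 / f 0`. -/
theorem stmt_15 (F f : ℝ → ℝ)
    (hF : ∀ x ∈ Set.Ioo (-1 : ℝ) 1, HasDerivAt F (f x) x)
    (hFpos : ∀ x ∈ Set.Ioo (-1 : ℝ) 1, 0 < F x)
    (hfpos : ∀ x ∈ Set.Ioo (-1 : ℝ) 1, 0 < f x)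
    (hlc : StrictConcaveOn ℝ (Set.Ioo (-1 : ℝ) 1) (fun x => Real.log (F x)))
    (p₁ : ℝ) (hp₁ : p₁ ∈ Set.Ioo (0 : ℝ) 2)
    (hfoc : p₁ = 2 * F (-p₁ / 2) / f (-p₁ / 2)) :
    p₁ < 2 * F 0 / f 0 := by
  obtain ⟨hp0, hp2⟩ := hp₁
  set x : ℝ := -p₁ / 2 with hxdef
  have hxmem : x ∈ Set.Ioo (-1 : ℝ) 1 := by
    constructor <;> [skip; skip] <;> simp only [hxdef] <;> linarith
  have h0mem : (0 : ℝ) ∈ Set.Ioo (-1 : ℝ) 1 := by constructor <;> norm_num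
  have hxlt0 : x < 0 := by simp only [hxdef]; linarith
  have hgx : HasDerivAt (fun t => Real.log (F t)) (f x / F x) x := by
    have := (hF x hxmem).log (ne_of_gt (hFpos x hxmem))
    simpa using this
  have hg0 : HasDerivAt (fun t => Real.log (F t)) (f 0 / F 0) 0 := by
    have := (hF 0 h0mem).log (ne_of_gt (hFpos 0 h0mem))
    simpa using this
  have h1 : slope (fun t => Real.log (F t)) x 0 < f x / F x :=
    hlc.slope_lt_of_hasDerivAt hxmem h0mem hxlt0 hgx
  have h2 : f 0 / F 0 < slope (fun t => Real.log (F t)) x 0 :=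
    hlc.lt_slope_of_hasDerivAt hxmem h0mem hxlt0 hg0
  have hkey : f 0 / F 0 < f x / F x := h2.trans h1
  have hF0 : 0 < F 0 := hFpos 0 h0mem
  have hf0 : 0 < f 0 := hfpos 0 h0mem
  have hFx : 0 < F x := hFpos x hxmem
  have hfx : 0 < f x := hfpos x hxmem
  rw [hfoc]
  rw [div_lt_div_iff₀ hfx hf0]
  have := (div_lt_div_iff₀ hF0 hFx).mp hkey
  nlinarith
end
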